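/- Suppose f : F_2^n → ℝ satisfies ‖f‖_A ≤ M, V ⊆ F_2^n is a subgroup, and δ > 0. Then there exists a subgroup W ⊆ V with dim(W) ≥ dim(V) − M/δ such that Var[f | W + c] ≤ δM for every c ∈ W^⊥ (equivalently, for every coset W + c of W). -/

import Mathlib

/-
Energy increment, run as an extremal argument: take `W ≤ V` maximising
`∑_{a ∈ W^⊥} |f̂(a)| + δ · dim W`. Comparing with `V` bounds `δ (dim V - dim W)` by the
mass term, which lies in `[0, M]`. On a coset of `W`, `f` minus its mean is
`∑_{a ∉ W^⊥} f̂(a) χ_a`, so the variance is at most `∑_{a ∉ W^⊥} |f̂(a)| · m(a)`, where `m(a)`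
is the mass of `|f̂|` on `a + W^⊥`. If some `m(a)` exceeded `δ`, then `W ∩ a^⊥`, whose annihilator
contains `W^⊥ ∪ (a + W^⊥)`, would gain more than `δ` of mass while losing at most one dimension,
contradicting maximality. Hence the variance is at most `δ ‖f‖_A ≤ δ M`.
-/

open Finset
open scoped Classical

noncomputable def chi {n : ℕ} (a x : Fin n → ZMod 2) : ℝ :=
  if ∑ i, a i * x i = (0 : ZMod 2) then 1 else -1

noncomputable def fhat {n : ℕ} (f : (Fin n → ZMod 2) → ℝ) (a : Fin n → ZMod 2) : ℝ :=
  (∑ x, f x * chi a x) / 2 ^ n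

noncomputable def specNorm {n : ℕ} (f : (Fin n → ZMod 2) → ℝ) : ℝ :=
  ∑ a, |fhat f a|

/-- Average of `f` over the coset `W + c`. -/
noncomputable def cosetAvg {n : ℕ} (f : (Fin n → ZMod 2) → ℝ)
    (W : Submodule (ZMod 2) (Fin n → ZMod 2)) (c : Fin n → ZMod 2) : ℝ :=
  (∑ x ∈ univ.filter (fun x : Fin n → ZMod 2 => x - c ∈ W), f x) /
    (univ.filter (fun x : Fin n → ZMod 2 => x - c ∈ W)).card

/-- Variance of `f` over the coset `W + c`. -/
noncomputable def cosetVar {n : ℕ} (f : (Fin n → ZMod 2) → ℝ)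
    (W : Submodule (ZMod 2) (Fin n → ZMod 2)) (c : Fin n → ZMod 2) : ℝ :=
  cosetAvg (fun x => (f x - cosetAvg f W c) ^ 2) W c

open Matrix

section Characters

variable {n : ℕ}

lemma chi_apply (a x : Fin n → ZMod 2) : chi a x = if a ⬝ᵥ x = 0 then 1 else -1 := rfl

lemma ZMod.two_sign_add (s t : ZMod 2) :
    (if s + t = 0 then (1 : ℝ) else -1) = (if s = 0 then 1 else -1) * (if t = 0 then 1 else -1) := by
  have h : (1 : ZMod 2) + 1 = 0 := rfl
  have h01 : ∀ u : ZMod 2, u = 0 ∨ u = 1 := by decide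
  rcases h01 s with rfl | rfl <;> rcases h01 t with rfl | rfl <;> simp [h]

lemma chi_add_right (a x y : Fin n → ZMod 2) : chi a (x + y) = chi a x * chi a y := by
  simp only [chi_apply, dotProduct_add, ZMod.two_sign_add]

lemma chi_add_left (a b x : Fin n → ZMod 2) : chi (a + b) x = chi a x * chi b x := by
  simp only [chi_apply, add_dotProduct, ZMod.two_sign_add]

lemma chi_comm (a x : Fin n → ZMod 2) : chi a x = chi x a := by
  rw [chi_apply, chi_apply, dotProduct_comm]

lemma chi_zero_right (a : Fin n → ZMod 2) : chi a 0 = 1 := by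
  simp [chi_apply]

lemma chi_mul_self (a x : Fin n → ZMod 2) : chi a x * chi a x = 1 := by
  rw [chi_apply]; split_ifs <;> norm_num

lemma abs_chi (a x : Fin n → ZMod 2) : |chi a x| = 1 := by
  rw [chi_apply]; split_ifs <;> norm_num

lemma sum_chi_eq_zero_of_add_mem_iff {s : Finset (Fin n → ZMod 2)} {a w : Fin n → ZMod 2}
    (hs : ∀ x, x ∈ s ↔ x + w ∈ s) (hw : chi a w = -1) : ∑ x ∈ s, chi a x = 0 := by
  have h : ∑ x ∈ s, chi a x = -∑ x ∈ s, chi a x := by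
    calc ∑ x ∈ s, chi a x = ∑ x ∈ s, -chi a (x + w) :=
          sum_congr rfl fun x _ => by rw [chi_add_right, hw, mul_neg_one, neg_neg]
      _ = -∑ x ∈ s, chi a x := by
          rw [sum_neg_distrib]
          exact congrArg Neg.neg (sum_equiv (Equiv.addRight w) hs fun _ _ => rfl)
  linarith

lemma sum_chi_left (z : Fin n → ZMod 2) : ∑ a, chi a z = if z = 0 then 2 ^ n else 0 := by
  split_ifs with hz
  · simp [hz, chi_zero_right]
  · obtain ⟨i, hi⟩ := Function.ne_iff.1 hz
    simp_rw [chi_comm _ z]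
    refine sum_chi_eq_zero_of_add_mem_iff (w := Pi.single i 1) (by simp) ?_
    rw [chi_apply, dotProduct_single, mul_one]
    exact if_neg hi

theorem fourier_inversion (f : (Fin n → ZMod 2) → ℝ) (x : Fin n → ZMod 2) :
    ∑ a, fhat f a * chi a x = f x := by
  have hchi : ∀ a y, chi a y * chi a x = chi a (y - x) := fun a y => by
    conv_lhs => rw [← sub_add_cancel y x, chi_add_right, mul_assoc, chi_mul_self, mul_one]
  calc ∑ a, fhat f a * chi a x = (∑ y, f y * ∑ a, chi a (y - x)) / 2 ^ n := by
        simp_rw [fhat, div_mul_eq_mul_div, ← sum_div, sum_mul, mul_sum,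
          mul_assoc, hchi]
        rw [sum_comm]
    _ = f x := by
        simp_rw [sum_chi_left, sub_eq_zero, mul_ite, mul_zero, sum_ite_eq']
        simp

end Characters

section Cosets

variable {n : ℕ}

noncomputable def coset (W : Submodule (ZMod 2) (Fin n → ZMod 2)) (c : Fin n → ZMod 2) :
    Finset (Fin n → ZMod 2) :=
  univ.filter fun x => x - c ∈ W

noncomputable def perp (W : Submodule (ZMod 2) (Fin n → ZMod 2)) : Finset (Fin n → ZMod 2) :=
  univ.filter fun a => ∀ w ∈ W, a ⬝ᵥ w = 0

/-- The coset `a + W^⊥` of frequencies (in characteristic 2, `b ∈ a + W^⊥ ↔ a + b ∈ W^⊥`). -/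
noncomputable def perpCoset (W : Submodule (ZMod 2) (Fin n → ZMod 2)) (a : Fin n → ZMod 2) :
    Finset (Fin n → ZMod 2) :=
  univ.filter fun b => a + b ∈ perp W

variable {W : Submodule (ZMod 2) (Fin n → ZMod 2)} {a b c x : Fin n → ZMod 2}

lemma mem_coset : x ∈ coset W c ↔ x - c ∈ W := by simp [coset]

lemma mem_perp : a ∈ perp W ↔ ∀ w ∈ W, a ⬝ᵥ w = 0 := by simp [perp]

lemma mem_perpCoset : b ∈ perpCoset W a ↔ a + b ∈ perp W := by simp [perpCoset]

lemma sub_mem_perp (ha : a ∈ perp W) (hb : b ∈ perp W) :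
    a - b ∈ perp W :=
  mem_perp.2 fun w hw => by rw [sub_dotProduct, mem_perp.1 ha w hw, mem_perp.1 hb w hw, sub_zero]

lemma perp_anti {W' : Submodule (ZMod 2) (Fin n → ZMod 2)} (h : W' ≤ W) : perp W ⊆ perp W' :=
  fun _ ha => mem_perp.2 fun w hw => mem_perp.1 ha w (h hw)

lemma cosetAvg_eq_sum_coset_div (f : (Fin n → ZMod 2) → ℝ) (W : Submodule (ZMod 2) (Fin n → ZMod 2))
    (c : Fin n → ZMod 2) : cosetAvg f W c = (∑ x ∈ coset W c, f x) / #(coset W c) := rfl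

lemma card_coset_ne_zero (W : Submodule (ZMod 2) (Fin n → ZMod 2)) (c : Fin n → ZMod 2) :
    (#(coset W c) : ℝ) ≠ 0 := by
  have : c ∈ coset W c := mem_coset.2 (by simp)
  exact_mod_cast (card_pos.2 ⟨c, this⟩).ne'

lemma chi_eq_of_mem_coset (ha : a ∈ perp W) (hx : x ∈ coset W c) : chi a x = chi a c := by
  rw [← sub_add_cancel x c, chi_add_right, chi_apply, if_pos (mem_perp.1 ha _ (mem_coset.1 hx)),
    one_mul]

lemma sum_chi_coset (W : Submodule (ZMod 2) (Fin n → ZMod 2)) (c a : Fin n → ZMod 2) :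
    ∑ x ∈ coset W c, chi a x = if a ∈ perp W then #(coset W c) * chi a c else 0 := by
  split_ifs with ha
  · rw [sum_congr rfl fun x hx => chi_eq_of_mem_coset ha hx, sum_const, nsmul_eq_mul]
  · obtain ⟨w, hw, haw⟩ : ∃ w ∈ W, a ⬝ᵥ w ≠ 0 := by simpa [mem_perp] using ha
    refine sum_chi_eq_zero_of_add_mem_iff (w := w) (fun x => ?_) (if_neg haw)
    rw [mem_coset, mem_coset, add_sub_right_comm]
    exact (W.add_mem_iff_left hw).symm

lemma cosetAvg_eq_sum_perp (f : (Fin n → ZMod 2) → ℝ) (W : Submodule (ZMod 2) (Fin n → ZMod 2))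
    (c : Fin n → ZMod 2) : cosetAvg f W c = ∑ a ∈ perp W, fhat f a * chi a c := by
  rw [cosetAvg_eq_sum_coset_div, div_eq_iff (card_coset_ne_zero W c)]
  calc ∑ x ∈ coset W c, f x = ∑ a, fhat f a * ∑ x ∈ coset W c, chi a x := by
        simp_rw [← fourier_inversion f, mul_sum]
        exact sum_comm
    _ = (∑ a ∈ perp W, fhat f a * chi a c) * #(coset W c) := by
        simp_rw [sum_chi_coset, mul_ite, mul_zero, sum_ite_mem, univ_inter, sum_mul]
        exact sum_congr rfl fun a _ => by ring

lemma sub_cosetAvg_eq (f : (Fin n → ZMod 2) → ℝ) (hx : x ∈ coset W c) :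
    f x - cosetAvg f W c = ∑ a ∈ univ \ perp W, fhat f a * chi a x := by
  have hperp : ∑ a ∈ perp W, fhat f a * chi a c = ∑ a ∈ perp W, fhat f a * chi a x :=
    sum_congr rfl fun a ha => by rw [chi_eq_of_mem_coset ha hx]
  rw [cosetAvg_eq_sum_perp, hperp, ← fourier_inversion f x, ← sum_sdiff (subset_univ (perp W)),
    add_sub_cancel_right]

lemma cosetVar_eq (f : (Fin n → ZMod 2) → ℝ) (W : Submodule (ZMod 2) (Fin n → ZMod 2))
    (c : Fin n → ZMod 2) :
    cosetVar f W c = ∑ a ∈ univ \ perp W, ∑ b ∈ univ \ perp W,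
      if a + b ∈ perp W then fhat f a * fhat f b * chi (a + b) c else 0 := by
  rw [cosetVar, cosetAvg_eq_sum_coset_div, div_eq_iff (card_coset_ne_zero W c)]
  calc ∑ x ∈ coset W c, (f x - cosetAvg f W c) ^ 2
      = ∑ x ∈ coset W c, ∑ a ∈ univ \ perp W, ∑ b ∈ univ \ perp W,
          fhat f a * fhat f b * chi (a + b) x := by
        refine sum_congr rfl fun x hx => ?_
        rw [sq, sub_cosetAvg_eq f hx, sum_mul_sum]
        exact sum_congr rfl fun a _ => sum_congr rfl fun b _ => by rw [chi_add_left]; ring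
    _ = ∑ a ∈ univ \ perp W, ∑ b ∈ univ \ perp W,
          fhat f a * fhat f b * ∑ x ∈ coset W c, chi (a + b) x := by
        rw [sum_comm]
        refine sum_congr rfl fun a _ => ?_
        rw [sum_comm]
        simp_rw [mul_sum]
    _ = _ := by
        simp_rw [sum_chi_coset, sum_mul]
        refine sum_congr rfl fun a _ => sum_congr rfl fun b _ => ?_
        split_ifs <;> ring

end Cosets

lemma Submodule.finrank_le_finrank_inf_ker_add_one {K V : Type*} [DivisionRing K] [AddCommGroup V]
    [Module K V] [FiniteDimensional K V] (W : Submodule K V) (φ : Module.Dual K V) :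
    Module.finrank K W ≤ Module.finrank K ↥(W ⊓ LinearMap.ker φ) + 1 := by
  have hsup := Submodule.finrank_sup_add_finrank_inf_eq W (LinearMap.ker φ)
  have hle := Submodule.finrank_le (W ⊔ LinearMap.ker φ)
  have hrank := φ.finrank_range_add_finrank_ker
  have hrange : Module.finrank K (LinearMap.range φ) ≤ 1 :=
    (Submodule.finrank_le _).trans (Module.finrank_self K).le
  omega

section FourierMass

variable {n : ℕ}

noncomputable def fourierMass (f : (Fin n → ZMod 2) → ℝ) (s : Finset (Fin n → ZMod 2)) : ℝ :=
  ∑ a ∈ s, |fhat f a|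

variable (f : (Fin n → ZMod 2) → ℝ) {W : Submodule (ZMod 2) (Fin n → ZMod 2)}

lemma fourierMass_nonneg (s : Finset (Fin n → ZMod 2)) : 0 ≤ fourierMass f s :=
  sum_nonneg fun _ _ => abs_nonneg _

lemma fourierMass_mono {s t : Finset (Fin n → ZMod 2)} (h : s ⊆ t) :
    fourierMass f s ≤ fourierMass f t :=
  sum_le_sum_of_subset_of_nonneg h fun _ _ _ => abs_nonneg _

lemma fourierMass_le_specNorm (s : Finset (Fin n → ZMod 2)) : fourierMass f s ≤ specNorm f :=
  fourierMass_mono f (subset_univ s)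

lemma cosetVar_le_sum_mul_fourierMass (c : Fin n → ZMod 2) :
    cosetVar f W c ≤
      ∑ a ∈ univ \ perp W, |fhat f a| * fourierMass f (perpCoset W a) := by
  rw [cosetVar_eq]
  refine sum_le_sum fun a _ => ?_
  rw [fourierMass, perpCoset, mul_sum, sum_filter]
  calc ∑ b ∈ univ \ perp W, (if a + b ∈ perp W then fhat f a * fhat f b * chi (a + b) c else 0)
      ≤ ∑ b ∈ univ \ perp W, if a + b ∈ perp W then |fhat f a| * |fhat f b| else 0 := by
        refine sum_le_sum fun b _ => ?_
        split_ifs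
        · exact (le_abs_self _).trans_eq (by rw [abs_mul, abs_mul, abs_chi, mul_one])
        · exact le_rfl
    _ ≤ ∑ b, if a + b ∈ perp W then |fhat f a| * |fhat f b| else 0 :=
        sum_le_sum_of_subset_of_nonneg (subset_univ _) fun _ _ _ => by positivity

lemma cosetVar_le_of_forall_fourierMass_le {δ : ℝ} (hδ : 0 ≤ δ)
    (h : ∀ a ∉ perp W, fourierMass f (perpCoset W a) ≤ δ)
    (c : Fin n → ZMod 2) : cosetVar f W c ≤ δ * specNorm f :=
  calc cosetVar f W c
      ≤ ∑ a ∈ univ \ perp W, |fhat f a| * fourierMass f (perpCoset W a) :=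
        cosetVar_le_sum_mul_fourierMass f c
    _ ≤ ∑ a ∈ univ \ perp W, |fhat f a| * δ :=
        sum_le_sum fun a ha => mul_le_mul_of_nonneg_left (h a (mem_sdiff.1 ha).2) (abs_nonneg _)
    _ ≤ ∑ a, |fhat f a| * δ :=
        sum_le_sum_of_subset_of_nonneg (subset_univ _) fun _ _ _ => by positivity
    _ = δ * specNorm f := by rw [specNorm, ← sum_mul, mul_comm]

lemma fourierMass_perp_add_le_fourierMass_perp_inf_ker {a : Fin n → ZMod 2} (ha : a ∉ perp W) :
    fourierMass f (perp W) + fourierMass f (perpCoset W a) ≤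
      fourierMass f (perp (W ⊓ LinearMap.ker (dotProductEquiv (ZMod 2) (Fin n) a))) := by
  have hdisj : Disjoint (perp W) (perpCoset W a) :=
    disjoint_right.2 fun b hb hbW =>
      ha (add_sub_cancel_right a b ▸ sub_mem_perp (mem_perpCoset.1 hb) hbW)
  have hcoset : (perpCoset W a) ⊆
      perp (W ⊓ LinearMap.ker (dotProductEquiv (ZMod 2) (Fin n) a)) := fun b hb =>
    mem_perp.2 fun w hw => by
      obtain ⟨hwW, hwa⟩ := Submodule.mem_inf.1 hw
      rw [← add_sub_cancel_left a b, sub_dotProduct, mem_perp.1 (mem_perpCoset.1 hb) w hwW]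
      simpa using hwa
  rw [fourierMass, fourierMass, ← sum_union hdisj]
  exact fourierMass_mono f (union_subset (perp_anti inf_le_left) hcoset)

end FourierMass

theorem stmt10 {n : ℕ} (f : (Fin n → ZMod 2) → ℝ) (M δ : ℝ)
    (hM : specNorm f ≤ M) (V : Submodule (ZMod 2) (Fin n → ZMod 2)) (hδ : 0 < δ) :
    ∃ W : Submodule (ZMod 2) (Fin n → ZMod 2), W ≤ V ∧
      (Module.finrank (ZMod 2) W : ℝ) ≥ (Module.finrank (ZMod 2) V : ℝ) - M / δ ∧
      ∀ c : Fin n → ZMod 2, cosetVar f W c ≤ δ * M := by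
  have : Nonempty {W : Submodule (ZMod 2) (Fin n → ZMod 2) // W ≤ V} := ⟨⟨V, le_rfl⟩⟩
  obtain ⟨⟨W, hWV⟩, hmax⟩ := Finite.exists_max fun W : {W // W ≤ V} =>
    fourierMass f (perp W.1) + δ * Module.finrank (ZMod 2) W.1
  have hmass : ∀ a ∉ perp W, fourierMass f (perpCoset W a) ≤ δ := by
    intro a ha
    by_contra! hgt
    let W' := W ⊓ LinearMap.ker (dotProductEquiv (ZMod 2) (Fin n) a)
    have hW' := hmax ⟨W', inf_le_left.trans hWV⟩
    have hgain := fourierMass_perp_add_le_fourierMass_perp_inf_ker f ha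
    have hdim : (Module.finrank (ZMod 2) W : ℝ) ≤ Module.finrank (ZMod 2) W' + 1 := by
      exact_mod_cast W.finrank_le_finrank_inf_ker_add_one (dotProductEquiv (ZMod 2) (Fin n) a)
    linarith [mul_le_mul_of_nonneg_left hdim hδ.le]
  refine ⟨W, hWV, ?_, fun c => ?_⟩
  · have hV := hmax ⟨V, le_rfl⟩
    have hV0 := fourierMass_nonneg f (perp V)
    have hWM := fourierMass_le_specNorm f (perp W)
    rw [ge_iff_le, sub_le_comm, le_div_iff₀ hδ]
    linarith
  · exact (cosetVar_le_of_forall_fourierMass_le f hδ.le hmass c).trans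
      (mul_le_mul_of_nonneg_left hM hδ.le)
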